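/- arXiv:1305.1694 — 9 statements merged into one kernel-verified Lean document; each statement's English description precedes it below -/
import Mathlib

section
/- Let f : [0,1] → ℝ be continuous and positive such that the function t ↦ (1−t)/f(t) is nonincreasing on [0,1], and let F(x) = ∫₀ˣ (1−t)/f(t) dt. Let X be a finite index set, let y ∈ [0,1], and for each u ∈ X let y_u ∈ [0,1] with y_u ≤ y. If Σ_{u∈X} (y − y_u) = f(y), then 1 − y ≤ Σ_{u∈X} (F(y) − F(y_u)). -/
/-! Each `u` charges the interval `[y_u, y]`, on which the nonincreasing integrand
`g t = (1 - t) / f t` is at least `g y`; hence `F y - F y_u ≥ (y - y_u) g y`, and summing over `u`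
gives at least `f y · g y = 1 - y`. -/

open Set

theorem AntitoneOn.sub_mul_le_intervalIntegral {g : ℝ → ℝ} {a b : ℝ} (hab : a ≤ b)
    (hg : AntitoneOn g (Icc a b)) : (b - a) * g b ≤ ∫ t in a..b, g t := by
  have hb : b ∈ Icc a b := right_mem_Icc.mpr hab
  calc (b - a) * g b = ∫ _ in a..b, g b := by
        rw [intervalIntegral.integral_const, smul_eq_mul]
    _ ≤ ∫ t in a..b, g t :=
        intervalIntegral.integral_mono_on hab intervalIntegrable_const
          (hg.mono (uIcc_of_le hab).subset).intervalIntegrable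
          fun t ht => hg ht hb ht.2

theorem AntitoneOn.sub_mul_le_intervalIntegral_sub {g : ℝ → ℝ} {c d a b : ℝ}
    (hg : AntitoneOn g (Icc c d)) (ha : a ∈ Icc c d) (hb : b ∈ Icc c d) (hab : a ≤ b) :
    (b - a) * g b ≤ (∫ t in c..b, g t) - ∫ t in c..a, g t := by
  have hint : ∀ x ∈ Icc c d, IntervalIntegrable g MeasureTheory.volume c x := fun x hx =>
    (hg.mono (uIcc_subset_Icc (left_mem_Icc.mpr (hx.1.trans hx.2)) hx)).intervalIntegrable
  rw [intervalIntegral.integral_interval_sub_left (hint b hb) (hint a ha)]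
  exact (hg.mono (Icc_subset_Icc ha.1 hb.2)).sub_mul_le_intervalIntegral hab

theorem charging_lemma_general {ι : Type*} (f : ℝ → ℝ)
    (hfpos : ∀ t ∈ Set.Icc (0:ℝ) 1, 0 < f t)
    (hmono : ∀ s ∈ Set.Icc (0:ℝ) 1, ∀ t ∈ Set.Icc (0:ℝ) 1,
      s ≤ t → (1 - t) / f t ≤ (1 - s) / f s)
    (F : ℝ → ℝ) (hF : ∀ x, F x = ∫ t in (0:ℝ)..x, (1 - t) / f t)
    (X : Finset ι) (y : ℝ) (hy : y ∈ Set.Icc (0:ℝ) 1)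
    (yu : ι → ℝ) (hyu : ∀ u ∈ X, yu u ∈ Set.Icc (0:ℝ) 1)
    (hle : ∀ u ∈ X, yu u ≤ y)
    (hsum : ∑ u ∈ X, (y - yu u) = f y) :
    1 - y ≤ ∑ u ∈ X, (F y - F (yu u)) := by
  have hanti : AntitoneOn (fun t => (1 - t) / f t) (Icc 0 1) := hmono
  have hcharge : ∀ u ∈ X, (y - yu u) * ((1 - y) / f y) ≤ F y - F (yu u) := fun u hu => by
    rw [hF, hF]
    exact hanti.sub_mul_le_intervalIntegral_sub (hyu u hu) hy (hle u hu)
  calc 1 - y = f y * ((1 - y) / f y) := (mul_div_cancel₀ _ (hfpos y hy).ne').symm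
    _ = ∑ u ∈ X, (y - yu u) * ((1 - y) / f y) := by rw [← hsum, Finset.sum_mul]
    _ ≤ ∑ u ∈ X, (F y - F (yu u)) := Finset.sum_le_sum hcharge

/-- Charging lemma (Lemma 2): if `f` is continuous and positive on `[0,1]`,
`t ↦ (1-t)/f t` is nonincreasing on `[0,1]`, `F x = ∫₀ˣ (1-t)/f t dt`,
and `Σ_{u ∈ X} (y - y_u) = f y` with all `y_u ≤ y` in `[0,1]`, then
`1 - y ≤ Σ_{u ∈ X} (F y - F y_u)`. -/
theorem charging_lemma {ι : Type*} (f : ℝ → ℝ)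
    (hfc : ContinuousOn f (Set.Icc 0 1))
    (hfpos : ∀ t ∈ Set.Icc (0:ℝ) 1, 0 < f t)
    (hmono : ∀ s ∈ Set.Icc (0:ℝ) 1, ∀ t ∈ Set.Icc (0:ℝ) 1,
      s ≤ t → (1 - t) / f t ≤ (1 - s) / f s)
    (F : ℝ → ℝ) (hF : ∀ x, F x = ∫ t in (0:ℝ)..x, (1 - t) / f t)
    (X : Finset ι) (y : ℝ) (hy : y ∈ Set.Icc (0:ℝ) 1)
    (yu : ι → ℝ) (hyu : ∀ u ∈ X, yu u ∈ Set.Icc (0:ℝ) 1)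
    (hle : ∀ u ∈ X, yu u ≤ y)
    (hsum : ∑ u ∈ X, (y - yu u) = f y) :
    1 - y ≤ ∑ u ∈ X, (F y - F (yu u)) :=
  charging_lemma_general f hfpos hmono F hF X y hy yu hyu hle hsum
end

section
/- Let f : [0,1] → ℝ be continuous and positive, let X be a finite index set with y_u ∈ [0,1] for each u ∈ X, and let y = sup{ t ∈ [0,1] : Σ_{u∈X} max(t − y_u, 0) ≤ f(t) } (the set is nonempty since it contains 0). Then either y = 1 or Σ_{u∈X} max(y − y_u, 0) = f(y). -/
/-! The constraint set `{t ∈ [0,1] | Σ max (t - y_u) 0 ≤ f t}` is closed and contains `0`, so its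
supremum `y` belongs to it. If `y < 1` and the inequality were strict at `y`, continuity would keep
it strict slightly to the right of `y`, contradicting maximality. -/

open Set Filter Topology

section
variable {α β : Type*} [ConditionallyCompleteLinearOrder α] [TopologicalSpace α] [OrderTopology α]
  [DenselyOrdered α] [LinearOrder β] [TopologicalSpace β] [OrderClosedTopology β]
  {f g : α → β} {a b y : α}

theorem exists_mem_Ioo_lt_of_continuousWithinAt (hay : a ≤ y) (hyb : y < b)
    (hg : ContinuousWithinAt g (Icc a b) y) (hf : ContinuousWithinAt f (Icc a b) y)
    (hlt : g y < f y) : ∃ t ∈ Ioo y b, g t < f t := by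
  have hsub : Ioo y b ⊆ Icc a b := Ioo_subset_Icc_self.trans (Icc_subset_Icc_left hay)
  have hlim : ∀ᶠ t in 𝓝[>] y, g t < f t := by
    rw [← nhdsWithin_Ioo_eq_nhdsGT hyb]
    exact (hg.mono hsub).eventually_lt (hf.mono hsub) hlt
  have := nhdsGT_neBot_of_exists_gt ⟨b, hyb⟩
  exact (Eventually.and (Ioo_mem_nhdsGT hyb) hlim).exists

theorem csSup_setOf_le_eq_right_or_eq (hg : ContinuousOn g (Icc a b))
    (hf : ContinuousOn f (Icc a b)) (hne : {t ∈ Icc a b | g t ≤ f t}.Nonempty) :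
    sSup {t ∈ Icc a b | g t ≤ f t} = b ∨
      g (sSup {t ∈ Icc a b | g t ≤ f t}) = f (sSup {t ∈ Icc a b | g t ≤ f t}) := by
  set S := {t ∈ Icc a b | g t ≤ f t}
  have hbdd : BddAbove S := ⟨b, fun t ht => ht.1.2⟩
  obtain ⟨⟨hay, hyb⟩, hle⟩ : sSup S ∈ S := (isClosed_Icc.isClosed_le hg hf).csSup_mem hne hbdd
  refine hyb.eq_or_lt.imp id fun hlt => hle.antisymm (not_lt.mp fun hgf => ?_)
  obtain ⟨t, ⟨hyt, htb⟩, hgt⟩ := exists_mem_Ioo_lt_of_continuousWithinAt hay hlt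
    (hg _ ⟨hay, hyb⟩) (hf _ ⟨hay, hyb⟩) hgf
  exact hyt.not_ge (le_csSup hbdd ⟨⟨hay.trans hyt.le, htb.le⟩, hgt.le⟩)
end

/-- Water-level lemma: with `f` continuous and positive on `[0,1]` and
`y = sup { t ∈ [0,1] : Σ_{u ∈ X} max (t - y_u) 0 ≤ f t }` (the set contains `0`),
either `y = 1` or the allocation constraint is tight at `y`. -/
theorem water_level_lemma {ι : Type*} (f : ℝ → ℝ)
    (hfc : ContinuousOn f (Set.Icc 0 1))
    (hfpos : ∀ t ∈ Set.Icc (0:ℝ) 1, 0 < f t)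
    (X : Finset ι) (yu : ι → ℝ) (hyu : ∀ u ∈ X, yu u ∈ Set.Icc (0:ℝ) 1)
    (y : ℝ)
    (hy : y = sSup {t ∈ Set.Icc (0:ℝ) 1 | ∑ u ∈ X, max (t - yu u) 0 ≤ f t}) :
    y = 1 ∨ ∑ u ∈ X, max (y - yu u) 0 = f y := by
  have hzero : ∑ u ∈ X, max (0 - yu u) 0 = 0 :=
    Finset.sum_eq_zero fun u hu => max_eq_right (by linarith [(hyu u hu).1])
  have h0 : (0 : ℝ) ∈ Set.Icc (0:ℝ) 1 := left_mem_Icc.mpr zero_le_one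
  have hne : (0 : ℝ) ∈ {t ∈ Set.Icc (0:ℝ) 1 | ∑ u ∈ X, max (t - yu u) 0 ≤ f t} :=
    ⟨h0, by rw [hzero]; exact (hfpos 0 h0).le⟩
  subst hy
  exact csSup_setOf_le_eq_right_or_eq (by fun_prop) hfc ⟨0, hne⟩
end

section
/- Let r : [0,1] → ℝ be continuous and positive and let γ > 0 be such that for every p ∈ [0,1], r(p) + ∫_{1−p}^{1} (1−x)/r(x) dx ≤ γ. Then there exists a continuous positive function f : [0,1] → ℝ such that for every p ∈ [0,1], f(p) + ∫_{1−p}^{1} (1−x)/f(x) dx = γ. -/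
/-!
Iterate `T g (p) = γ - ∫_{1-p}^1 (1-x)/g x dx` starting from `r`. The hypothesis says
`r ≤ T r`, and `T` is monotone on functions bounded below by `m = min r > 0`, so the iterates
increase; they are bounded by `γ`, hence converge pointwise to some `F ≥ m`. Dominated
convergence (the integrands are bounded by `1/m`) gives `T F = F`, and `T F` is automatically
continuous.
-/

open MeasureTheory Set Filter Topology intervalIntegral

/-- Clamping `p` to `[0,1]` makes `optimalityMap γ g` and all its iterates defined and bounded
below on the whole line. -/
noncomputable def optimalityMap (γ : ℝ) (g : ℝ → ℝ) (p : ℝ) : ℝ :=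
  γ - ∫ x in (1 - projIcc 0 1 zero_le_one p : ℝ)..1, (1 - x) / g x

section optimalityMap

variable {γ m : ℝ} {g h : ℝ → ℝ}

lemma optimalityMap_apply_of_mem {p : ℝ} (hp : p ∈ Icc (0 : ℝ) 1) :
    optimalityMap γ g p = γ - ∫ x in (1 - p)..1, (1 - x) / g x := by
  rw [optimalityMap, projIcc_of_mem zero_le_one hp]

lemma optimalityMap_congr (hgh : EqOn g h (Icc 0 1)) : optimalityMap γ g = optimalityMap γ h := by
  ext p
  have hp := (projIcc (0 : ℝ) 1 zero_le_one p).2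
  refine congrArg (γ - ·) (integral_congr fun x hx => ?_)
  rw [uIcc_of_le (by linarith [hp.1])] at hx
  simp only [hgh ⟨by linarith [hp.2, hx.1], hx.2⟩]

lemma intervalIntegrable_one_sub_div (hm : 0 < m) (hg : Measurable g) (hgm : ∀ x, m ≤ g x)
    (a b : ℝ) : IntervalIntegrable (fun x => (1 - x) / g x) volume a b := by
  have hinv : IntervalIntegrable (fun x => (g x)⁻¹) volume a b := by
    refine (intervalIntegrable_const (c := m⁻¹)).mono_fun hg.inv.aestronglyMeasurable
      (Eventually.of_forall fun x => ?_)
    have hgx := hm.trans_le (hgm x)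
    simp only [norm_inv, Real.norm_of_nonneg hgx.le, Real.norm_of_nonneg (inv_nonneg.2 hm.le)]
    exact inv_anti₀ hm (hgm x)
  simpa only [div_eq_mul_inv] using
    hinv.continuousOn_mul (by fun_prop : Continuous fun x : ℝ => 1 - x).continuousOn

lemma continuous_optimalityMap (hm : 0 < m) (hg : Measurable g) (hgm : ∀ x, m ≤ g x) :
    Continuous (optimalityMap γ g) := by
  have hprim : Continuous fun t => ∫ x in t..1, (1 - x) / g x := by
    refine (continuous_primitive (intervalIntegrable_one_sub_div hm hg hgm) 1).neg.congr fun t => ?_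
    exact (integral_symm 1 t).symm
  exact continuous_const.sub
    (hprim.comp (continuous_const.sub (continuous_subtype_val.comp continuous_projIcc)))

lemma optimalityMap_le (hg : ∀ x, 0 ≤ g x) (p : ℝ) : optimalityMap γ g p ≤ γ := by
  have hp := (projIcc (0 : ℝ) 1 zero_le_one p).2
  refine sub_le_self _ (integral_nonneg (by linarith [hp.1]) fun x hx => ?_)
  exact div_nonneg (by linarith [hx.2]) (hg x)

lemma optimalityMap_mono (hm : 0 < m) (hg : Measurable g) (hgm : ∀ x, m ≤ g x)
    (hh : Measurable h) (hgh : g ≤ h) : optimalityMap γ g ≤ optimalityMap γ h := by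
  intro p
  have hp := (projIcc (0 : ℝ) 1 zero_le_one p).2
  have hhm x : m ≤ h x := (hgm x).trans (hgh x)
  refine sub_le_sub_left (integral_mono_on (by linarith [hp.1])
    (intervalIntegrable_one_sub_div hm hh hhm _ _) (intervalIntegrable_one_sub_div hm hg hgm _ _)
    fun x hx => ?_) γ
  exact div_le_div_of_nonneg_left (by linarith [hx.2]) (hm.trans_le (hgm x)) (hgh x)

lemma tendsto_optimalityMap {f : ℕ → ℝ → ℝ} {F : ℝ → ℝ} (hm : 0 < m)
    (hf : ∀ n, Measurable (f n)) (hfm : ∀ n x, m ≤ f n x)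
    (hfF : ∀ x, Tendsto (fun n => f n x) atTop (𝓝 (F x))) (p : ℝ) :
    Tendsto (fun n => optimalityMap γ (f n) p) atTop (𝓝 (optimalityMap γ F p)) := by
  have hp := (projIcc (0 : ℝ) 1 zero_le_one p).2
  refine tendsto_const_nhds.sub (tendsto_integral_filter_of_dominated_convergence (fun _ => 1 / m)
    (Eventually.of_forall fun n =>
      ((measurable_const.sub measurable_id).div (hf n)).aestronglyMeasurable)
    (Eventually.of_forall fun n => Eventually.of_forall fun x hx => ?_) intervalIntegrable_const
    (Eventually.of_forall fun x _ => ?_))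
  · rw [uIoc_of_le (by linarith [hp.1])] at hx
    have hfx := hm.trans_le (hfm n x)
    rw [Real.norm_eq_abs, abs_div, abs_of_pos hfx, abs_of_nonneg (by linarith [hx.2])]
    exact div_le_div₀ zero_le_one (by linarith [hx.1, hp.2]) hm (hfm n x)
  · exact tendsto_const_nhds.div (hfF x) (hm.trans_le (ge_of_tendsto' (hfF x) (hfm · x))).ne'

end optimalityMap

structure IsOptimalitySubsolution (γ m : ℝ) (g : ℝ → ℝ) : Prop where
  measurable : Measurable g
  le_apply : ∀ x, m ≤ g x
  le_optimalityMap : g ≤ optimalityMap γ g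

namespace IsOptimalitySubsolution

variable {γ m : ℝ} {g : ℝ → ℝ}

lemma map (hm : 0 < m) (hg : IsOptimalitySubsolution γ m g) :
    IsOptimalitySubsolution γ m (optimalityMap γ g) where
  measurable := (continuous_optimalityMap hm hg.measurable hg.le_apply).measurable
  le_apply x := (hg.le_apply x).trans (hg.le_optimalityMap x)
  le_optimalityMap := optimalityMap_mono hm hg.measurable hg.le_apply
    (continuous_optimalityMap hm hg.measurable hg.le_apply).measurable hg.le_optimalityMap

lemma iterate (hm : 0 < m) (hg : IsOptimalitySubsolution γ m g) (n : ℕ) :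
    IsOptimalitySubsolution γ m ((optimalityMap γ)^[n] g) := by
  induction n with
  | zero => exact hg
  | succ n ih => simpa only [Function.iterate_succ_apply'] using ih.map hm

lemma exists_fixedPoint (hm : 0 < m) (hg : IsOptimalitySubsolution γ m g) :
    ∃ F : ℝ → ℝ, Measurable F ∧ (∀ x, m ≤ F x) ∧ optimalityMap γ F = F := by
  set f : ℕ → ℝ → ℝ := fun n => (optimalityMap γ)^[n] g
  have hf n : IsOptimalitySubsolution γ m (f n) := hg.iterate hm n
  have hf_succ n : f (n + 1) = optimalityMap γ (f n) := Function.iterate_succ_apply' _ _ _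
  have hmono x : Monotone fun n => f n x :=
    monotone_nat_of_le_succ fun n => (hf_succ n).symm ▸ (hf n).le_optimalityMap x
  have hbdd x : BddAbove (range fun n => f n x) := by
    refine ⟨γ, forall_mem_range.2 fun n => (hmono x n.le_succ).trans ?_⟩
    show f (n + 1) x ≤ γ
    rw [hf_succ]
    exact optimalityMap_le (fun y => hm.le.trans ((hf n).le_apply y)) x
  have hlim x : Tendsto (fun n => f n x) atTop (𝓝 (⨆ n, f n x)) :=
    tendsto_atTop_ciSup (hmono x) (hbdd x)
  refine ⟨fun x => ⨆ n, f n x, .iSup fun n => (hf n).measurable,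
    fun x => ge_of_tendsto' (hlim x) fun n => (hf n).le_apply x, funext fun p => ?_⟩
  refine tendsto_nhds_unique
    (tendsto_optimalityMap hm (fun n => (hf n).measurable) (fun n => (hf n).le_apply) hlim p) ?_
  simpa only [Function.comp_def, hf_succ] using (hlim p).comp (tendsto_add_atTop_nat 1)

end IsOptimalitySubsolution

theorem optimality_condition_general (r : ℝ → ℝ)
    (hrc : ContinuousOn r (Set.Icc 0 1))
    (hrpos : ∀ p ∈ Set.Icc (0:ℝ) 1, 0 < r p)
    (γ : ℝ)
    (hbound : ∀ p ∈ Set.Icc (0:ℝ) 1, r p + ∫ x in (1 - p)..1, (1 - x) / r x ≤ γ) :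
    ∃ f : ℝ → ℝ, ContinuousOn f (Set.Icc 0 1) ∧
      (∀ p ∈ Set.Icc (0:ℝ) 1, 0 < f p) ∧
      (∀ p ∈ Set.Icc (0:ℝ) 1, f p + ∫ x in (1 - p)..1, (1 - x) / f x = γ) := by
  obtain ⟨z, hz, hzmin⟩ := isCompact_Icc.exists_isMinOn (nonempty_Icc.2 zero_le_one) hrc
  set r₀ : ℝ → ℝ := fun p => r (projIcc 0 1 zero_le_one p)
  have hr₀c : Continuous r₀ :=
    hrc.comp_continuous (continuous_subtype_val.comp continuous_projIcc) fun p => Subtype.mem _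
  have hr₀ : EqOn r₀ r (Icc 0 1) := fun p hp => by simp only [r₀, projIcc_of_mem _ hp]
  have hsub : IsOptimalitySubsolution γ (r z) r₀ := by
    refine ⟨hr₀c.measurable, fun p => hzmin (Subtype.mem _), fun p => ?_⟩
    have hp := (projIcc (0 : ℝ) 1 zero_le_one p).2
    rw [optimalityMap_congr hr₀]
    simp only [r₀, optimalityMap]
    linarith [hbound _ hp]
  obtain ⟨F, hFm, hF, hFfix⟩ := hsub.exists_fixedPoint (hrpos z hz)
  refine ⟨F, hFfix ▸ (continuous_optimalityMap (hrpos z hz) hFm hF).continuousOn,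
    fun p _ => (hrpos z hz).trans_le (hF p), fun p hp => ?_⟩
  have := congrFun hFfix p
  rw [optimalityMap_apply_of_mem hp] at this
  linarith

/-- Optimality-condition lemma (Lemma 4): if `r` is continuous and positive on
`[0,1]` and `r p + ∫_{1-p}^1 (1-x)/r x dx ≤ γ` for all `p ∈ [0,1]`, then there is
a continuous positive `f` on `[0,1]` with `f p + ∫_{1-p}^1 (1-x)/f x dx = γ`
for all `p ∈ [0,1]`. -/
theorem optimality_condition (r : ℝ → ℝ)
    (hrc : ContinuousOn r (Set.Icc 0 1))
    (hrpos : ∀ p ∈ Set.Icc (0:ℝ) 1, 0 < r p)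
    (γ : ℝ) (hγ : 0 < γ)
    (hbound : ∀ p ∈ Set.Icc (0:ℝ) 1, r p + ∫ x in (1 - p)..1, (1 - x) / r x ≤ γ) :
    ∃ f : ℝ → ℝ, ContinuousOn f (Set.Icc 0 1) ∧
      (∀ p ∈ Set.Icc (0:ℝ) 1, 0 < f p) ∧
      (∀ p ∈ Set.Icc (0:ℝ) 1, f p + ∫ x in (1 - p)..1, (1 - x) / f x = γ) :=
  optimality_condition_general r hrc hrpos γ hbound
end

section
/- Let r : [0,1] → ℝ be a nonnegative differentiable function satisfying r(z)·r′(1−z) = z − 1 for every z ∈ [0,1]. Then there exists k ≥ 1 such that for every z ∈ [0,1], r(z) = ((1+k)/2 − z)^((1+k)/(2k)) · (z + (k−1)/2)^((k−1)/(2k)). -/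
/-!
Reflecting the equation gives `r (1 - z) * r' z = -z`, so `(r z * r (1 - z))' = 1 - 2z` and
`r z * r (1 - z) = c + z - z²` with `c = r 0 * r 1 ≥ 0`. For `k = √(1 + 4c)`, `a = (1 + k)/2`
and `b = (k - 1)/2` this quadratic is `(a - z)(z + b)`, so on `(0,1)` the function `r` solves the
linear equation `r' = -z r / ((a - z)(z + b))`, whose solutions are the multiples of
`(a - z)^(a/k) (z + b)^(b/k)`. The product identity at `z = 1/2` and `r ≥ 0` force the multiple to
be `1`, and continuity extends the equality to `[0,1]`.
-/

open Set Real

theorem Convex.is_const_of_hasDerivWithinAt_zero {𝕜 G : Type*} [RCLike 𝕜]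
    [NormedAddCommGroup G] [NormedSpace 𝕜 G] {f : 𝕜 → G} {s : Set 𝕜} {x y : 𝕜}
    (hs : Convex ℝ s) (hf : ∀ x ∈ s, HasDerivWithinAt f 0 s x) (hx : x ∈ s) (hy : y ∈ s) :
    f x = f y := by
  have := hs.norm_image_sub_le_of_norm_hasDerivWithin_le hf (fun _ _ ↦ norm_zero.le) hx hy
  rw [zero_mul, norm_le_zero_iff, sub_eq_zero] at this
  exact this.symm

theorem Convex.div_eq_div_of_hasDerivWithinAt_mul_self {f g φ : ℝ → ℝ} {s : Set ℝ}
    {x y : ℝ} (hs : Convex ℝ s) (hf : ∀ x ∈ s, HasDerivWithinAt f (φ x * f x) s x)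
    (hg : ∀ x ∈ s, HasDerivWithinAt g (φ x * g x) s x) (hg₀ : ∀ x ∈ s, g x ≠ 0)
    (hx : x ∈ s) (hy : y ∈ s) : f x / g x = f y / g y := by
  refine hs.is_const_of_hasDerivWithinAt_zero (f := fun x ↦ f x / g x) (fun z hz ↦ ?_) hx hy
  exact ((hf z hz).fun_div (hg z hz) (hg₀ z hz)).congr_deriv (by ring)

theorem HasDerivWithinAt.comp_const_sub {𝕜 F : Type*} [NontriviallyNormedField 𝕜]
    [NormedAddCommGroup F] [NormedSpace 𝕜 F] {f : 𝕜 → F} {f' : F} {s t : Set 𝕜}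
    {a x : 𝕜} (hf : HasDerivWithinAt f f' s (a - x)) (hst : MapsTo (a - ·) t s) :
    HasDerivWithinAt (fun x ↦ f (a - x)) (-f') t x := by
  simpa [Function.comp_def] using hf.scomp x ((hasDerivWithinAt_id x t).const_sub a) hst

noncomputable def solutionFamily (k z : ℝ) : ℝ :=
  ((1 + k) / 2 - z) ^ ((1 + k) / (2 * k)) * (z + (k - 1) / 2) ^ ((k - 1) / (2 * k))

theorem solutionFamily_pos {k z : ℝ} (hz : z ∈ Ioo ((1 - k) / 2) ((1 + k) / 2)) :
    0 < solutionFamily k z :=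
  mul_pos (rpow_pos_of_pos (by linarith [hz.2]) _) (rpow_pos_of_pos (by linarith [hz.1]) _)

theorem continuous_solutionFamily {k : ℝ} (hk : 1 ≤ k) : Continuous (solutionFamily k) := by
  have hk₀ : 0 < k := by linarith
  refine ((continuous_const.sub continuous_id).rpow_const fun _ ↦ Or.inr ?_).mul
    ((continuous_id.add continuous_const).rpow_const fun _ ↦ Or.inr ?_) <;>
  exact div_nonneg (by linarith) (by linarith)

theorem hasDerivAt_solutionFamily {k z : ℝ} (hk : 0 < k)
    (hz : z ∈ Ioo ((1 - k) / 2) ((1 + k) / 2)) :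
    HasDerivAt (solutionFamily k) (-z / ((k ^ 2 - 1) / 4 + z - z ^ 2) * solutionFamily k z) z := by
  have ha : 0 < (1 + k) / 2 - z := by linarith [hz.2]
  have hb : 0 < z + (k - 1) / 2 := by linarith [hz.1]
  refine HasDerivAt.congr_deriv (f := solutionFamily k)
    ((((hasDerivAt_id z).const_sub _).rpow_const (Or.inl ha.ne')).fun_mul
      (((hasDerivAt_id z).add_const _).rpow_const (Or.inl hb.ne'))) ?_
  rw [solutionFamily, id, rpow_sub_one ha.ne', rpow_sub_one hb.ne',
    show (k ^ 2 - 1) / 4 + z - z ^ 2 = ((1 + k) / 2 - z) * (z + (k - 1) / 2) by ring]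
  generalize ((1 + k) / 2 - z) ^ ((1 + k) / (2 * k)) = A
  generalize (z + (k - 1) / 2) ^ ((k - 1) / (2 * k)) = B
  have ha' : 1 + k - 2 * z ≠ 0 := by linarith
  have hb' : 2 * z + (k - 1) ≠ 0 := by linarith
  field_simp
  ring

theorem solutionFamily_mul_solutionFamily_one_sub {k z : ℝ} (hk : k ≠ 0)
    (hz : z ∈ Icc ((1 - k) / 2) ((1 + k) / 2)) :
    solutionFamily k z * solutionFamily k (1 - z) = (k ^ 2 - 1) / 4 + z - z ^ 2 := by
  have ha : 0 ≤ (1 + k) / 2 - z := by linarith [hz.2]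
  have hb : 0 ≤ z + (k - 1) / 2 := by linarith [hz.1]
  have hexp : (1 + k) / (2 * k) + (k - 1) / (2 * k) = 1 := by field_simp; ring
  rw [solutionFamily, solutionFamily, show (1 + k) / 2 - (1 - z) = z + (k - 1) / 2 by ring,
    show 1 - z + (k - 1) / 2 = (1 + k) / 2 - z by ring]
  calc _ = ((1 + k) / 2 - z) ^ ((1 + k) / (2 * k) + (k - 1) / (2 * k)) *
        (z + (k - 1) / 2) ^ ((1 + k) / (2 * k) + (k - 1) / (2 * k)) := by
        rw [rpow_add' ha (by rw [hexp]; exact one_ne_zero),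
          rpow_add' hb (by rw [hexp]; exact one_ne_zero)]
        ring
    _ = _ := by rw [hexp, rpow_one, rpow_one]; ring

theorem apply_mul_apply_one_sub_eq {r r' : ℝ → ℝ}
    (hderiv : ∀ z ∈ Icc (0:ℝ) 1, HasDerivWithinAt r (r' z) (Icc 0 1) z)
    (heq : ∀ z ∈ Icc (0:ℝ) 1, r z * r' (1 - z) = z - 1) {z : ℝ} (hz : z ∈ Icc (0:ℝ) 1) :
    r z * r (1 - z) = r 0 * r 1 + z - z ^ 2 := by
  have hmaps : MapsTo (1 - ·) (Icc (0:ℝ) 1) (Icc 0 1) := fun _ ↦ Icc.mem_iff_one_sub_mem.mp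
  have hderiv_zero : ∀ z ∈ Icc (0:ℝ) 1,
      HasDerivWithinAt (fun z ↦ r z * r (1 - z) - z + z ^ 2) 0 (Icc 0 1) z := by
    intro z hz
    have hrefl := heq (1 - z) (hmaps hz)
    rw [sub_sub_cancel, sub_sub_cancel_left] at hrefl
    refine ((((hderiv z hz).fun_mul ((hderiv (1 - z) (hmaps hz)).comp_const_sub hmaps)).fun_sub
      (hasDerivWithinAt_id z _)).fun_add ((hasDerivWithinAt_id z _).fun_pow 2)).congr_deriv ?_
    simp only [id]
    linear_combination hrefl - heq z hz
  have := (convex_Icc (0:ℝ) 1).is_const_of_hasDerivWithinAt_zero hderiv_zero hz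
    ⟨le_rfl, zero_le_one⟩
  simp only [sub_zero] at this
  linarith

theorem hasDerivWithinAt_neg_div_mul_self {r r' : ℝ → ℝ}
    (hderiv : ∀ z ∈ Icc (0:ℝ) 1, HasDerivWithinAt r (r' z) (Icc 0 1) z)
    (heq : ∀ z ∈ Icc (0:ℝ) 1, r z * r' (1 - z) = z - 1) (hc : 0 ≤ r 0 * r 1)
    {z : ℝ} (hz : z ∈ Ioo (0:ℝ) 1) :
    HasDerivWithinAt r (-z / (r 0 * r 1 + z - z ^ 2) * r z) (Ioo 0 1) z := by
  have hz' := Ioo_subset_Icc_self hz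
  have hrefl := heq (1 - z) (Icc.mem_iff_one_sub_mem.mp hz')
  rw [sub_sub_cancel, sub_sub_cancel_left] at hrefl
  have hprod := apply_mul_apply_one_sub_eq hderiv heq hz'
  have hQ : 0 < r 0 * r 1 + z - z ^ 2 := by nlinarith [hz.1, hz.2]
  refine ((hderiv z hz').mono Ioo_subset_Icc_self).congr_deriv ?_
  rw [div_mul_eq_mul_div, eq_div_iff hQ.ne']
  linear_combination r z * hrefl - r' z * hprod

/-- Characterization of nonnegative differentiable solutions of
`r z · r' (1-z) = z - 1` on `[0,1]`: they are exactly the family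
`r z = ((1+k)/2 - z)^((1+k)/(2k)) · (z + (k-1)/2)^((k-1)/(2k))` with `k ≥ 1`
(real powers). -/
theorem solution_family (r r' : ℝ → ℝ)
    (hderiv : ∀ z ∈ Set.Icc (0:ℝ) 1, HasDerivWithinAt r (r' z) (Set.Icc 0 1) z)
    (hnonneg : ∀ z ∈ Set.Icc (0:ℝ) 1, 0 ≤ r z)
    (heq : ∀ z ∈ Set.Icc (0:ℝ) 1, r z * r' (1 - z) = z - 1) :
    ∃ k : ℝ, 1 ≤ k ∧ ∀ z ∈ Set.Icc (0:ℝ) 1,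
      r z = ((1 + k) / 2 - z) ^ ((1 + k) / (2 * k)) *
            (z + (k - 1) / 2) ^ ((k - 1) / (2 * k)) := by
  have hc : 0 ≤ r 0 * r 1 :=
    mul_nonneg (hnonneg 0 ⟨le_rfl, zero_le_one⟩) (hnonneg 1 ⟨zero_le_one, le_rfl⟩)
  set k := √(1 + 4 * (r 0 * r 1))
  have hk : 1 ≤ k := one_le_sqrt.mpr (by linarith)
  have hkc : (k ^ 2 - 1) / 4 = r 0 * r 1 := by rw [sq_sqrt (by linarith)]; ring
  have hsub : Ioo (0:ℝ) 1 ⊆ Ioo ((1 - k) / 2) ((1 + k) / 2) :=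
    Ioo_subset_Ioo (by linarith) (by linarith)
  have hhalf : (1 / 2 : ℝ) ∈ Ioo 0 1 := ⟨by norm_num, by norm_num⟩
  have hF₀ : ∀ z ∈ Ioo (0:ℝ) 1, solutionFamily k z ≠ 0 := fun z hz ↦
    (solutionFamily_pos (hsub hz)).ne'
  have hratio : ∀ z ∈ Ioo (0:ℝ) 1,
      r z / solutionFamily k z = r (1 / 2) / solutionFamily k (1 / 2) := fun z hz ↦
    (convex_Ioo 0 1).div_eq_div_of_hasDerivWithinAt_mul_self
      (fun x hx ↦ hasDerivWithinAt_neg_div_mul_self hderiv heq hc hx)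
      (fun x hx ↦ hkc ▸ (hasDerivAt_solutionFamily (by linarith) (hsub hx)).hasDerivWithinAt)
      hF₀ hz hhalf
  have hr_half : r (1 / 2) = solutionFamily k (1 / 2) := by
    have hr := apply_mul_apply_one_sub_eq hderiv heq (Ioo_subset_Icc_self hhalf)
    have hF := solutionFamily_mul_solutionFamily_one_sub (by linarith)
      (Ioo_subset_Icc_self (hsub hhalf))
    norm_num only [hkc] at hr hF
    exact (mul_self_inj (hnonneg _ (Ioo_subset_Icc_self hhalf))
      (solutionFamily_pos (hsub hhalf)).le).mp (hr.trans hF.symm)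
  have hIoo : EqOn r (solutionFamily k) (Ioo 0 1) := fun z hz ↦ by
    rw [← div_eq_one_iff_eq (hF₀ z hz), hratio z hz, hr_half, div_self (hF₀ _ hhalf)]
  exact ⟨k, hk, hIoo.of_subset_closure (fun z hz ↦ (hderiv z hz).continuousWithinAt)
    (continuous_solutionFamily hk).continuousOn Ioo_subset_Icc_self (closure_Ioo zero_ne_one).ge⟩
end

section
/- Let k > 1 and define f_k(z) = ((1+k)/2 − z)^((1+k)/(2k)) · (z + (k−1)/2)^((k−1)/(2k)) for z ∈ [0,1]. Then f_k is positive on [0,1] and the function t ↦ (1−t)/f_k(t) is nonincreasing on [0,1]. -/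
/-!
Write `f_k = A^p B^q` with `A = (1+k)/2 - t`, `B = t + (k-1)/2`, `p = (1+k)/(2k)`, `q = (k-1)/(2k)`.
The exponents are chosen so that `q A - p B = -t`, hence `f_k' = -t A^(p-1) B^(q-1)`. The derivative
of `(1-t)/f_k` then has the sign of `-(f_k + (1-t) f_k') = -A^(p-1) B^(q-1) (AB - t(1-t))`, and
`AB - t(1-t) = (k²-1)/4` does not depend on `t`.
-/

open Set

theorem antitoneOn_div_of_hasDerivAt {u f u' f' : ℝ → ℝ} {D : Set ℝ} (hD : Convex ℝ D)
    (hu : ∀ x ∈ D, HasDerivAt u (u' x) x) (hf : ∀ x ∈ D, HasDerivAt f (f' x) x)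
    (hpos : ∀ x ∈ D, 0 < f x) (hsign : ∀ x ∈ D, u' x * f x ≤ u x * f' x) :
    AntitoneOn (fun x => u x / f x) D := by
  have hquot : ∀ x ∈ D,
      HasDerivAt (fun x => u x / f x) ((u' x * f x - u x * f' x) / f x ^ 2) x :=
    fun x hx => (hu x hx).div (hf x hx) (hpos x hx).ne'
  refine antitoneOn_of_hasDerivWithinAt_nonpos hD
    (fun x hx => (hquot x hx).continuousAt.continuousWithinAt)
    (fun x hx => (hquot x (interior_subset hx)).hasDerivWithinAt) fun x hx => ?_
  exact div_nonpos_of_nonpos_of_nonneg (sub_nonpos.2 (hsign x (interior_subset hx))) (sq_nonneg _)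

theorem hasDerivAt_sub_rpow_mul_add_rpow {a b p q t : ℝ} (hA : 0 < a - t) (hB : 0 < t + b) :
    HasDerivAt (fun z => (a - z) ^ p * (z + b) ^ q)
      ((a - t) ^ (p - 1) * (t + b) ^ (q - 1) * (q * (a - t) - p * (t + b))) t := by
  have hA' := ((hasDerivAt_id' t).const_sub a).rpow_const (p := p) (Or.inl hA.ne')
  have hB' := ((hasDerivAt_id' t).add_const b).rpow_const (p := q) (Or.inl hB.ne')
  refine (hA'.mul hB').congr_deriv ?_
  rw [Real.rpow_sub_one hA.ne', Real.rpow_sub_one hB.ne']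
  field_simp
  ring

noncomputable def fk (k z : ℝ) : ℝ :=
  ((1 + k) / 2 - z) ^ ((1 + k) / (2 * k)) * (z + (k - 1) / 2) ^ ((k - 1) / (2 * k))

section fk

variable {k t : ℝ}

theorem fk_bases_pos (hk : 1 < k) (ht : t ∈ Icc (0:ℝ) 1) :
    0 < (1 + k) / 2 - t ∧ 0 < t + (k - 1) / 2 :=
  ⟨by linarith [ht.2], by linarith [ht.1]⟩

theorem fk_pos (hk : 1 < k) (ht : t ∈ Icc (0:ℝ) 1) : 0 < fk k t := by
  obtain ⟨hA, hB⟩ := fk_bases_pos hk ht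
  unfold fk
  positivity

theorem hasDerivAt_fk (hk : 1 < k) (ht : t ∈ Icc (0:ℝ) 1) :
    HasDerivAt (fk k)
      (((1 + k) / 2 - t) ^ ((1 + k) / (2 * k) - 1) *
        (t + (k - 1) / 2) ^ ((k - 1) / (2 * k) - 1) * -t) t := by
  have hexp :
      (k - 1) / (2 * k) * ((1 + k) / 2 - t) - (1 + k) / (2 * k) * (t + (k - 1) / 2) = -t := by
    field_simp
    ring
  rw [← hexp]
  exact hasDerivAt_sub_rpow_mul_add_rpow (fk_bases_pos hk ht).1 (fk_bases_pos hk ht).2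

theorem fk_add_one_sub_mul_deriv (hk : 1 < k) (ht : t ∈ Icc (0:ℝ) 1) :
    fk k t + (1 - t) * (((1 + k) / 2 - t) ^ ((1 + k) / (2 * k) - 1) *
        (t + (k - 1) / 2) ^ ((k - 1) / (2 * k) - 1) * -t) =
    ((1 + k) / 2 - t) ^ ((1 + k) / (2 * k) - 1) *
        (t + (k - 1) / 2) ^ ((k - 1) / (2 * k) - 1) * ((k ^ 2 - 1) / 4) := by
  obtain ⟨hA, hB⟩ := fk_bases_pos hk ht
  rw [fk, ← sub_add_cancel ((1 + k) / (2 * k)) 1, ← sub_add_cancel ((k - 1) / (2 * k)) 1,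
    Real.rpow_add_one hA.ne', Real.rpow_add_one hB.ne', add_sub_cancel_right,
    add_sub_cancel_right]
  ring

end fk

/-- For `k > 1`, the allocation function
`f_k z = ((1+k)/2 - z)^((1+k)/(2k)) · (z + (k-1)/2)^((k-1)/(2k))`
is positive on `[0,1]`, and `t ↦ (1-t)/f_k t` is nonincreasing on `[0,1]`. -/
theorem fk_admissible (k : ℝ) (hk : 1 < k) (f : ℝ → ℝ)
    (hf : ∀ z, f z = ((1 + k) / 2 - z) ^ ((1 + k) / (2 * k)) *
                     (z + (k - 1) / 2) ^ ((k - 1) / (2 * k))) :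
    (∀ z ∈ Set.Icc (0:ℝ) 1, 0 < f z) ∧
    (∀ s ∈ Set.Icc (0:ℝ) 1, ∀ t ∈ Set.Icc (0:ℝ) 1,
      s ≤ t → (1 - t) / f t ≤ (1 - s) / f s) := by
  obtain rfl : f = fk k := funext hf
  refine ⟨fun t ht => fk_pos hk ht, fun s hs t ht hst => ?_⟩
  refine antitoneOn_div_of_hasDerivAt (u := fun t => 1 - t) (u' := fun _ => -1) (convex_Icc 0 1)
    (fun t _ => ((hasDerivAt_id' t).const_sub 1).congr_deriv (by ring))
    (fun t ht => hasDerivAt_fk hk ht) (fun t ht => fk_pos hk ht) (fun t ht => ?_) hs ht hst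
  obtain ⟨hA, hB⟩ := fk_bases_pos hk ht
  have hc : 0 ≤ (k ^ 2 - 1) / 4 := by nlinarith
  have hX : 0 ≤ ((1 + k) / 2 - t) ^ ((1 + k) / (2 * k) - 1) *
      (t + (k - 1) / 2) ^ ((k - 1) / (2 * k) - 1) := by positivity
  linarith [fk_add_one_sub_mul_deriv hk ht, mul_nonneg hX hc]
end

section
/- Let r : [0,1] → ℝ be a nonnegative differentiable function satisfying r(p)·r′(1−p) = p − 1 for every p ∈ [0,1]. Then there exists a constant c ≥ 0 such that r(p)·r(1−p) = p − p² + c for all p ∈ [0,1]; moreover c = r(0)·r(1). -/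
/-!
Differentiating `p ↦ r p * r (1 - p)` gives `r' p * r (1 - p) - r p * r' (1 - p)`. The functional
equation at `p` and at `1 - p` evaluates the two terms as `-p` and `p - 1`, so the product has
derivative `1 - 2p`, the derivative of `p - p²`. Two functions on `[0, 1]` with the same derivative
differ by a constant, read off at `p = 0`.
-/

open Set

theorem eqOn_Icc_of_hasDerivWithinAt_eq {f g f' : ℝ → ℝ} {a b : ℝ}
    (hf : ∀ x ∈ Icc a b, HasDerivWithinAt f (f' x) (Icc a b) x)
    (hg : ∀ x ∈ Icc a b, HasDerivWithinAt g (f' x) (Icc a b) x) (ha : f a = g a) :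
    EqOn f g (Icc a b) :=
  have toIci {h : ℝ → ℝ} (hh : ∀ x ∈ Icc a b, HasDerivWithinAt h (f' x) (Icc a b) x) :
      ∀ x ∈ Ico a b, HasDerivWithinAt h (f' x) (Ici x) x := fun x hx =>
    (hh x (Ico_subset_Icc_self hx)).mono_of_mem_nhdsWithin (Icc_mem_nhdsGE_of_mem hx)
  eq_of_has_deriv_right_eq (toIci hf) (toIci hg)
    (fun x hx => (hf x hx).continuousWithinAt) (fun x hx => (hg x hx).continuousWithinAt) ha

theorem one_sub_mem_Icc_zero_one {p : ℝ} (hp : p ∈ Icc (0 : ℝ) 1) : 1 - p ∈ Icc (0 : ℝ) 1 :=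
  ⟨sub_nonneg.2 hp.2, sub_le_self 1 hp.1⟩

theorem hasDerivWithinAt_mul_comp_one_sub {r r' : ℝ → ℝ}
    (hr : ∀ p ∈ Icc (0 : ℝ) 1, HasDerivWithinAt r (r' p) (Icc 0 1) p) {p : ℝ}
    (hp : p ∈ Icc (0 : ℝ) 1) :
    HasDerivWithinAt (fun q => r q * r (1 - q)) (r' p * r (1 - p) - r p * r' (1 - p))
      (Icc 0 1) p := by
  have hreflect : HasDerivWithinAt (fun q => r (1 - q)) (r' (1 - p) * -1) (Icc 0 1) p :=
    (hr _ (one_sub_mem_Icc_zero_one hp)).comp p ((hasDerivWithinAt_id p _).const_sub 1)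
      fun _ => one_sub_mem_Icc_zero_one
  exact ((hr p hp).mul hreflect).congr_deriv (by ring)

/-- Product identity: if `r` is nonnegative and differentiable on `[0,1]` with
`r p · r' (1-p) = p - 1`, then there is `c ≥ 0`, namely `c = r 0 · r 1`, with
`r p · r (1-p) = p - p² + c` on `[0,1]`. -/
theorem product_identity (r r' : ℝ → ℝ)
    (hderiv : ∀ p ∈ Set.Icc (0:ℝ) 1, HasDerivWithinAt r (r' p) (Set.Icc 0 1) p)
    (hnonneg : ∀ p ∈ Set.Icc (0:ℝ) 1, 0 ≤ r p)
    (heq : ∀ p ∈ Set.Icc (0:ℝ) 1, r p * r' (1 - p) = p - 1) :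
    ∃ c : ℝ, 0 ≤ c ∧ (∀ p ∈ Set.Icc (0:ℝ) 1, r p * r (1 - p) = p - p ^ 2 + c) ∧
      c = r 0 * r 1 := by
  have hprod : ∀ p ∈ Icc (0 : ℝ) 1,
      HasDerivWithinAt (fun q => r q * r (1 - q)) (1 - 2 * p) (Icc 0 1) p := by
    intro p hp
    have hreflected : r (1 - p) * r' p = -p := by
      simpa using heq (1 - p) (one_sub_mem_Icc_zero_one hp)
    exact (hasDerivWithinAt_mul_comp_one_sub hderiv hp).congr_deriv (by linarith [heq p hp])
  have hquad : ∀ p ∈ Icc (0 : ℝ) 1,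
      HasDerivWithinAt (fun q => q - q ^ 2 + r 0 * r 1) (1 - 2 * p) (Icc 0 1) p := fun p _ =>
    (((hasDerivAt_id p).sub (hasDerivAt_pow 2 p)).add_const _).hasDerivWithinAt.congr_deriv
      (by simp)
  refine ⟨r 0 * r 1, mul_nonneg (hnonneg 0 (by simp)) (hnonneg 1 (by simp)), ?_, rfl⟩
  exact eqOn_Icc_of_hasDerivWithinAt_eq hprod hquad (by simp)
end

section
/- Let k > 1 and define f_k(z) = ((1+k)/2 − z)^((1+k)/(2k)) · (z + (k−1)/2)^((k−1)/(2k)) for z ∈ [0,1]. Then f_k is differentiable and positive on [0,1] and satisfies f_k(z)·f_k′(1−z) = z − 1 for every z ∈ [0,1]. -/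
/-!
Write `u = (1+k)/2 - z`, `v = z + (k-1)/2`, `a = (1+k)/(2k)`, `b = (k-1)/(2k)`, so that
`f z = u^a v^b` and `f' z = f z · (b/v - a/u)`. Since `(1+k)/2 - (1-z) = v` and `(1-z) + (k-1)/2 = u`,
the reflection `z ↦ 1 - z` swaps `u` and `v`, so `f z · f (1-z) = u^(a+b) v^(a+b) = u v`. Hence
`f z · f'(1-z) = u v (b/u - a/v) = b v - a u`, which equals `z - 1` for these `a` and `b`.
-/

theorem hasDerivAt_sub_rpow_mul_add_rpow_s7 {a b c d z : ℝ} (hu : 0 < c - z) (hv : 0 < z + d) :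
    HasDerivAt (fun x => (c - x) ^ a * (x + d) ^ b)
      ((c - z) ^ a * (z + d) ^ b * (b / (z + d) - a / (c - z))) z := by
  have hleft : HasDerivAt (fun x => (c - x) ^ a) (-1 * a * (c - z) ^ (a - 1)) z :=
    ((hasDerivAt_id' z).const_sub c).rpow_const (Or.inl hu.ne')
  have hright : HasDerivAt (fun x => (x + d) ^ b) (1 * b * (z + d) ^ (b - 1)) z :=
    ((hasDerivAt_id' z).add_const d).rpow_const (Or.inl hv.ne')
  refine (hleft.mul hright).congr_deriv ?_
  rw [Real.rpow_sub_one hu.ne', Real.rpow_sub_one hv.ne']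
  field_simp
  ring

theorem rpow_mul_rpow_mul_swap_mul_sub_div {a b u v : ℝ} (hu : 0 < u) (hv : 0 < v)
    (hab : a + b = 1) :
    u ^ a * v ^ b * (v ^ a * u ^ b * (b / u - a / v)) = b * v - a * u := by
  calc u ^ a * v ^ b * (v ^ a * u ^ b * (b / u - a / v))
      = u ^ a * u ^ b * (v ^ a * v ^ b) * (b / u - a / v) := by ring
    _ = u * v * (b / u - a / v) := by
      rw [← Real.rpow_add hu, ← Real.rpow_add hv, hab, Real.rpow_one, Real.rpow_one]
    _ = b * v - a * u := by field_simp

/-- For `k > 1`, the function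
`f_k z = ((1+k)/2 - z)^((1+k)/(2k)) · (z + (k-1)/2)^((k-1)/(2k))`
is differentiable and positive on `[0,1]`, and satisfies the functional
differential equation `f_k z · f_k' (1-z) = z - 1` on `[0,1]`. -/
theorem fk_solves_fde (k : ℝ) (hk : 1 < k) (f : ℝ → ℝ)
    (hf : ∀ z, f z = ((1 + k) / 2 - z) ^ ((1 + k) / (2 * k)) *
                     (z + (k - 1) / 2) ^ ((k - 1) / (2 * k))) :
    (∀ z ∈ Set.Icc (0:ℝ) 1, DifferentiableAt ℝ f z ∧ 0 < f z) ∧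
    (∀ z ∈ Set.Icc (0:ℝ) 1, f z * deriv f (1 - z) = z - 1) := by
  obtain rfl : f = fun z => ((1 + k) / 2 - z) ^ ((1 + k) / (2 * k)) *
      (z + (k - 1) / 2) ^ ((k - 1) / (2 * k)) := funext hf
  have hk0 : 0 < k := by linarith
  have hpos : ∀ z ∈ Set.Icc (0:ℝ) 1, 0 < (1 + k) / 2 - z ∧ 0 < z + (k - 1) / 2 :=
    fun z hz => ⟨by linarith [hz.2], by linarith [hz.1]⟩
  refine ⟨fun z hz => ?_, fun z hz => ?_⟩ <;> obtain ⟨hu, hv⟩ := hpos z hz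
  · exact ⟨(hasDerivAt_sub_rpow_mul_add_rpow_s7 hu hv).differentiableAt, by positivity⟩
  · have hab : (1 + k) / (2 * k) + (k - 1) / (2 * k) = 1 := by field_simp; ring
    have hderiv := (hasDerivAt_sub_rpow_mul_add_rpow_s7 (a := (1 + k) / (2 * k))
      (b := (k - 1) / (2 * k)) (c := (1 + k) / 2) (d := (k - 1) / 2) (z := 1 - z)
      (by linarith [hz.1]) (by linarith [hz.2])).deriv
    rw [hderiv, show (1 + k) / 2 - (1 - z) = z + (k - 1) / 2 by ring,
      show 1 - z + (k - 1) / 2 = (1 + k) / 2 - z by ring,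
      rpow_mul_rpow_mul_swap_mul_sub_div hu hv hab]
    field_simp
    ring
end

section
/- Let G = (L, R, E) be a finite bipartite graph and let its vertices arrive in an order in which all vertices of L precede all vertices of R. Run GreedyAllocation with allocation function f(t) = t + α where α = 1/(e−1), producing final potentials y : L ∪ R → [0,1]. Then y is a fractional vertex cover of G, and for every vertex cover C* ⊆ L ∪ R of G (a set of vertices containing an endpoint of each edge), Σ_{v ∈ L∪R} y_v ≤ (1+α)·|C*| = |C*|/(1 − 1/e). -/
open Finset

/-- The water level chosen by `GreedyAllocation` with allocation function `f`:
the supremum of `t ∈ [0,1]` such that raising all potentials in `S` up to `t`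
costs at most `f t`. -/
noncomputable def waterLevel {ι : Type*} (f : ℝ → ℝ) (S : Finset ι) (y : ι → ℝ) : ℝ :=
  sSup {t ∈ Set.Icc (0:ℝ) 1 | ∑ u ∈ S, max (t - y u) 0 ≤ f t}

/-- The previously arrived neighbors of vertex `i` (vertices arrive in the
order `0, 1, …, n-1`; `E` is the adjacency predicate of the graph). -/
def neighborsBefore {n : ℕ} (E : Fin n → Fin n → Bool) (i : Fin n) : Finset (Fin n) :=
  Finset.univ.filter fun j => j < i ∧ E j i = true

/-- Potentials maintained by `GreedyAllocation` with allocation function `f`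
after `i` vertices have been processed. When vertex `i` arrives, the water
level `w` is computed over its previously arrived neighbors; each such
neighbor's potential is raised to at least `w`, and vertex `i` receives
potential `1 - w`. -/
noncomputable def greedyPotential (f : ℝ → ℝ) {n : ℕ} (E : Fin n → Fin n → Bool) :
    ℕ → Fin n → ℝ
  | 0 => fun _ => 0
  | (i + 1) => fun v =>
      if h : i < n then
        let vi : Fin n := ⟨i, h⟩
        let w := waterLevel f (neighborsBefore E vi) (greedyPotential f E i)
        if v = vi then 1 - w
        else if v ∈ neighborsBefore E vi then max (greedyPotential f E i v) w
        else greedyPotential f E i v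
      else greedyPotential f E i v

/-- The water level used when processing vertex `i`. -/
noncomputable def stepLevel (f : ℝ → ℝ) {n : ℕ} (E : Fin n → Fin n → Bool) (i : Fin n) : ℝ :=
  waterLevel f (neighborsBefore E i) (greedyPotential f E i.val)

/-- The edge values set by the `PrimalDual` algorithm: when vertex `i` arrives,
for each previously arrived neighbor `j` the edge `(j,i)` receives value
`(max(w_i - y_j, 0)/β)·(1 + (1 - w_i)/f(w_i))`, using the potentials before
updating; all other pairs get `0`. -/
noncomputable def pdEdge (f : ℝ → ℝ) (β : ℝ) {n : ℕ} (E : Fin n → Fin n → Bool)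
    (j i : Fin n) : ℝ :=
  if j < i ∧ E j i = true then
    (max (stepLevel f E i - greedyPotential f E i.val j) 0 / β) *
      (1 + (1 - stepLevel f E i) / f (stepLevel f E i))
  else 0

/-!
Charge the growth of `∑ y` to the edges: when `i` arrives with water level `w`, the earlier
neighbour `j` with potential `a` receives `x j i = max (w - a) 0 / (w + α)`, which is `pdEdge`
with `β = 1 + α`. The step adds `(1 - w) + ∑ⱼ max (w - y j) 0` to `∑ y`, and the water level
makes the sum equal to `f w = w + α` unless `w = 1`; hence `∑ y = (1 + α) ∑ x`. The same
condition gives column sums `∑ⱼ x j i ≤ 1`, while `x j i ≤ log (w + α) - log (a + α)` makes the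
row sums telescope to at most `log ((1 + α) / α) = 1`. When the left side arrives first, every
vertex has either a row or a column, so `x` is a fractional matching and weak duality bounds
`∑ x` by the size of any vertex cover. The cover property itself holds for every `f`: the
arriving vertex takes `1 - w` and its earlier neighbours are raised to at least `w`.
-/

open Real Topology

lemma sub_div_le_log_sub {p q : ℝ} (hp : 0 < p) (hq : 0 < q) : (q - p) / q ≤ log q - log p := by
  have h := one_sub_inv_le_log_of_pos (div_pos hq hp)
  rw [log_div hq.ne' hp.ne', inv_div] at h
  calc (q - p) / q = 1 - p / q := by field_simp
    _ ≤ log q - log p := h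

lemma exp_one_sub_one_pos : 0 < exp 1 - 1 :=
  sub_pos.2 (one_lt_exp_iff.2 one_pos)

lemma log_one_add_sub_log_exp_one_sub_one_inv :
    log (1 + (exp 1 - 1)⁻¹) - log (exp 1 - 1)⁻¹ = 1 := by
  have he := exp_one_sub_one_pos
  rw [← log_div (by positivity) (by positivity),
    show (1 + (exp 1 - 1)⁻¹) / (exp 1 - 1)⁻¹ = exp 1 by field_simp; ring, log_exp]

lemma one_add_exp_one_sub_one_inv : 1 + (exp 1 - 1)⁻¹ = (1 - (exp 1)⁻¹)⁻¹ := by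
  have he := exp_one_sub_one_pos.ne'
  field_simp
  ring

/-- Weak duality between fractional matchings and vertex covers. -/
lemma sum_le_card_of_load_le_one {V : Type*} [Fintype V] [DecidableEq V] (x : V → V → ℝ)
    (hx : ∀ u v, 0 ≤ x u v) (hload : ∀ v, ∑ w, x v w + ∑ u, x u v ≤ 1)
    (C : Finset V) (hC : ∀ u v, x u v ≠ 0 → u ∈ C ∨ v ∈ C) :
    ∑ u, ∑ v, x u v ≤ #C := by
  have hsplit : ∀ u v, x u v ≤ (if u ∈ C then x u v else 0) + (if v ∈ C then x u v else 0) := by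
    intro u v
    by_cases h : x u v = 0
    · rw [h]; split_ifs <;> simp
    · rcases hC u v h with hu | hv
      · rw [if_pos hu]; split_ifs <;> linarith [hx u v]
      · rw [if_pos hv]; split_ifs <;> linarith [hx u v]
  calc ∑ u, ∑ v, x u v
      ≤ ∑ u, ∑ v, ((if u ∈ C then x u v else 0) + (if v ∈ C then x u v else 0)) := by
        gcongr with u _ v _; exact hsplit u v
    _ = ∑ c ∈ C, (∑ w, x c w + ∑ u, x u c) := by
        simp only [sum_add_distrib, sum_ite_irrel, sum_const_zero, ← sum_filter,
          filter_mem_eq_inter, univ_inter]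
        rw [sum_comm (s := univ) (t := C)]
    _ ≤ ∑ _c ∈ C, (1 : ℝ) := sum_le_sum fun c _ => hload c
    _ = #C := by simp

section WaterLevel

variable {ι : Type*} {f : ℝ → ℝ} {S : Finset ι} {y : ι → ℝ}

lemma waterLevel_mem_Icc : waterLevel f S y ∈ Set.Icc (0 : ℝ) 1 :=
  ⟨Real.sSup_nonneg fun _ ht => ht.1.1, Real.sSup_le (fun _ ht => ht.1.2) zero_le_one⟩

lemma sum_max_waterLevel_sub_le (hf : Continuous f) (hf₀ : 0 ≤ f 0) (hy : ∀ u ∈ S, 0 ≤ y u) :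
    ∑ u ∈ S, max (waterLevel f S y - y u) 0 ≤ f (waterLevel f S y) := by
  have hclosed : IsClosed {t ∈ Set.Icc (0 : ℝ) 1 | ∑ u ∈ S, max (t - y u) 0 ≤ f t} :=
    isClosed_Icc.inter (isClosed_le (by fun_prop) hf)
  have hzero : (0 : ℝ) ∈ {t ∈ Set.Icc (0 : ℝ) 1 | ∑ u ∈ S, max (t - y u) 0 ≤ f t} := by
    refine ⟨Set.left_mem_Icc.2 zero_le_one, ?_⟩
    rwa [sum_eq_zero fun u hu => max_eq_right (by linarith [hy u hu])]
  exact (hclosed.csSup_mem ⟨0, hzero⟩ ⟨1, fun _ ht => ht.1.2⟩).2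

lemma le_sum_max_waterLevel_sub (hf : Continuous f) (h1 : waterLevel f S y < 1) :
    f (waterLevel f S y) ≤ ∑ u ∈ S, max (waterLevel f S y - y u) 0 := by
  by_contra! hlt
  have hnear : ∀ᶠ t in 𝓝[>] waterLevel f S y,
      (∑ u ∈ S, max (t - y u) 0 < f t) ∧ t ∈ Set.Ioo (waterLevel f S y) 1 :=
    (eventually_nhdsWithin_of_eventually_nhds
      ((isOpen_lt (f := fun t => ∑ u ∈ S, max (t - y u) 0) (by fun_prop) hf).eventually_mem hlt)).and
      (Ioo_mem_nhdsGT h1)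
  obtain ⟨t, hcost, hwt, ht1⟩ := hnear.exists
  have : t ≤ waterLevel f S y := le_csSup ⟨1, fun _ hs => hs.1.2⟩
    ⟨⟨waterLevel_mem_Icc.1.trans hwt.le, ht1.le⟩, hcost.le⟩
  linarith

end WaterLevel

section Potentials

variable {f : ℝ → ℝ} {n : ℕ} (E : Fin n → Fin n → Bool)

lemma mem_neighborsBefore {i j : Fin n} : j ∈ neighborsBefore E i ↔ j < i ∧ E j i = true := by
  simp [neighborsBefore]

lemma stepLevel_mem_Icc (i : Fin n) : stepLevel f E i ∈ Set.Icc (0 : ℝ) 1 :=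
  waterLevel_mem_Icc

lemma greedyPotential_succ (i v : Fin n) :
    greedyPotential f E (i + 1) v =
      if v = i then 1 - stepLevel f E i
      else if v ∈ neighborsBefore E i then max (greedyPotential f E i v) (stepLevel f E i)
      else greedyPotential f E i v := by
  rw [greedyPotential]
  beta_reduce
  rw [dif_pos i.isLt]
  rfl

lemma greedyPotential_succ_of_le {k : ℕ} (hk : n ≤ k) :
    greedyPotential f E (k + 1) = greedyPotential f E k := by
  funext v
  rw [greedyPotential]
  beta_reduce
  rw [dif_neg hk.not_gt]

lemma greedyPotential_eq_zero_of_le {k : ℕ} {v : Fin n} (hkv : k ≤ v) :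
    greedyPotential f E k v = 0 := by
  induction k with
  | zero => rfl
  | succ k ih =>
    obtain ⟨i, rfl⟩ : ∃ i : Fin n, (i : ℕ) = k := ⟨⟨k, by omega⟩, rfl⟩
    have hvi : v ≠ i := fun h => by subst h; omega
    have hnb : v ∉ neighborsBefore E i := fun h => by
      have := ((mem_neighborsBefore E).1 h).1
      omega
    rw [greedyPotential_succ, if_neg hvi, if_neg hnb, ih (by omega)]

lemma greedyPotential_mem_Icc (k : ℕ) (v : Fin n) :
    greedyPotential f E k v ∈ Set.Icc (0 : ℝ) 1 := by
  induction k generalizing v with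
  | zero => exact Set.left_mem_Icc.2 zero_le_one
  | succ k ih =>
    rcases lt_or_ge k n with hk | hk
    · obtain ⟨i, rfl⟩ : ∃ i : Fin n, (i : ℕ) = k := ⟨⟨k, hk⟩, rfl⟩
      have hw := stepLevel_mem_Icc (f := f) E i
      rw [greedyPotential_succ]
      split_ifs
      · exact ⟨by linarith [hw.2], by linarith [hw.1]⟩
      · exact ⟨(ih v).1.trans (le_max_left _ _), max_le (ih v).2 hw.2⟩
      · exact ih v
    · rw [greedyPotential_succ_of_le E hk]
      exact ih v

lemma greedyPotential_monotone (v : Fin n) : Monotone fun k => greedyPotential f E k v := by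
  refine monotone_nat_of_le_succ fun k => ?_
  rcases lt_or_ge k n with hk | hk
  · obtain ⟨i, rfl⟩ : ∃ i : Fin n, (i : ℕ) = k := ⟨⟨k, hk⟩, rfl⟩
    rw [greedyPotential_succ]
    split_ifs with hvi
    · rw [hvi, greedyPotential_eq_zero_of_le E le_rfl, sub_nonneg]
      exact (stepLevel_mem_Icc E i).2
    · exact le_max_left _ _
    · exact le_rfl
  · simp only [greedyPotential_succ_of_le E hk, le_rfl]

lemma one_le_greedyPotential_add {i j : Fin n} (hji : j < i) (hE : E j i = true) :
    1 ≤ greedyPotential f E n j + greedyPotential f E n i := by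
  have hi : greedyPotential f E (i + 1) i = 1 - stepLevel f E i := by
    rw [greedyPotential_succ, if_pos rfl]
  have hj : stepLevel f E i ≤ greedyPotential f E (i + 1) j := by
    rw [greedyPotential_succ, if_neg hji.ne, if_pos ((mem_neighborsBefore E).2 ⟨hji, hE⟩)]
    exact le_max_right _ _
  have hlater := fun v => greedyPotential_monotone (f := f) E v (show (i : ℕ) + 1 ≤ n from i.isLt)
  linarith [hlater i, hlater j]

end Potentials

noncomputable def stepCost (f : ℝ → ℝ) {n : ℕ} (E : Fin n → Fin n → Bool) (i : Fin n) : ℝ :=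
  ∑ j ∈ neighborsBefore E i, max (stepLevel f E i - greedyPotential f E i j) 0

section Accounting

variable {f : ℝ → ℝ} {n : ℕ} (E : Fin n → Fin n → Bool)

lemma stepCost_le (hf : Continuous f) (hf₀ : 0 ≤ f 0) (i : Fin n) :
    stepCost f E i ≤ f (stepLevel f E i) :=
  sum_max_waterLevel_sub_le hf hf₀ fun u _ => (greedyPotential_mem_Icc E i u).1

lemma stepCost_eq_of_stepLevel_lt_one (hf : Continuous f) (hf₀ : 0 ≤ f 0) {i : Fin n}
    (h1 : stepLevel f E i < 1) : stepCost f E i = f (stepLevel f E i) :=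
  (stepCost_le E hf hf₀ i).antisymm (le_sum_max_waterLevel_sub hf h1)

lemma sum_greedyPotential_succ_sub (i : Fin n) :
    ∑ v, greedyPotential f E (i + 1) v - ∑ v, greedyPotential f E i v =
      (1 - stepLevel f E i) + stepCost f E i := by
  have hstep : ∀ v, greedyPotential f E (i + 1) v - greedyPotential f E i v =
      (if v = i then 1 - stepLevel f E i else 0) +
        (if v ∈ neighborsBefore E i then
          max (stepLevel f E i - greedyPotential f E i v) 0 else 0) := by
    intro v
    rw [greedyPotential_succ]
    by_cases hvi : v = i
    · have hnb : i ∉ neighborsBefore E i := fun h => ((mem_neighborsBefore E).1 h).1.false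
      subst hvi
      simp [hnb, greedyPotential_eq_zero_of_le E le_rfl]
    · split_ifs
      · rw [← max_sub_sub_right, sub_self, max_comm, zero_add]
      · simp
  rw [← sum_sub_distrib, sum_congr rfl fun v _ => hstep v, sum_add_distrib, sum_ite_eq',
    if_pos (mem_univ _), sum_ite_mem, univ_inter, stepCost]

lemma sum_pdEdge_left (β : ℝ) (i : Fin n) :
    ∑ j, pdEdge f β E j i =
      stepCost f E i / β * (1 + (1 - stepLevel f E i) / f (stepLevel f E i)) := by
  unfold pdEdge stepCost neighborsBefore
  rw [sum_filter, sum_div, sum_mul]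
  refine sum_congr rfl fun j _ => ?_
  split_ifs <;> simp

lemma mul_sum_pdEdge_left {β : ℝ} (hf : Continuous f) (hfpos : ∀ t ∈ Set.Icc (0 : ℝ) 1, 0 < f t)
    (hβ : β ≠ 0) (i : Fin n) :
    β * ∑ j, pdEdge f β E j i = (1 - stepLevel f E i) + stepCost f E i := by
  have hf₀ := (hfpos 0 (Set.left_mem_Icc.2 zero_le_one)).le
  have hw := stepLevel_mem_Icc (f := f) E i
  rw [sum_pdEdge_left]
  rcases hw.2.lt_or_eq with h1 | h1
  · have hfw := (hfpos _ hw).ne'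
    rw [stepCost_eq_of_stepLevel_lt_one E hf hf₀ h1]
    field_simp
    ring
  · rw [h1]
    field_simp
    ring

lemma sum_greedyPotential_eq {β : ℝ} (hf : Continuous f)
    (hfpos : ∀ t ∈ Set.Icc (0 : ℝ) 1, 0 < f t) (hβ : β ≠ 0) :
    ∑ v, greedyPotential f E n v = β * ∑ i, ∑ j, pdEdge f β E j i := by
  set Y : ℕ → ℝ := fun k => ∑ v, greedyPotential f E k v
  have hY₀ : Y 0 = 0 := sum_eq_zero fun _ _ => rfl
  calc Y n = ∑ i : Fin n, (Y (i + 1) - Y i) := by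
        rw [Fin.sum_univ_eq_sum_range (fun k => Y (k + 1) - Y k), sum_range_sub, hY₀, sub_zero]
    _ = β * ∑ i, ∑ j, pdEdge f β E j i := by
        rw [mul_sum]
        exact sum_congr rfl fun i _ => by
          rw [sum_greedyPotential_succ_sub, mul_sum_pdEdge_left E hf hfpos hβ]

lemma lt_and_adj_of_pdEdge_ne_zero {β : ℝ} {j i : Fin n} (h : pdEdge f β E j i ≠ 0) :
    j < i ∧ E j i = true :=
  by_contra fun hji => h (if_neg hji)

lemma pdEdge_nonneg {β : ℝ} (hfpos : ∀ t ∈ Set.Icc (0 : ℝ) 1, 0 < f t) (hβ : 0 < β)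
    (j i : Fin n) : 0 ≤ pdEdge f β E j i := by
  have hw := stepLevel_mem_Icc (f := f) E i
  unfold pdEdge
  split_ifs
  · exact mul_nonneg (div_nonneg (le_max_right _ _) hβ.le)
      (add_nonneg zero_le_one (div_nonneg (sub_nonneg.2 hw.2) (hfpos _ hw).le))
  · exact le_rfl

lemma sum_pdEdge_left_le_one {β : ℝ} (hf : Continuous f)
    (hfpos : ∀ t ∈ Set.Icc (0 : ℝ) 1, 0 < f t) (hβ : ∀ t ∈ Set.Icc (0 : ℝ) 1, f t + 1 - t ≤ β)
    (i : Fin n) : ∑ j, pdEdge f β E j i ≤ 1 := by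
  have hw := stepLevel_mem_Icc (f := f) E i
  have hfw := hfpos _ hw
  have hβ₀ : 0 < β := by
    linarith [hβ 1 (Set.right_mem_Icc.2 zero_le_one), hfpos 1 (Set.right_mem_Icc.2 zero_le_one)]
  have hD := stepCost_le E hf (hfpos 0 (Set.left_mem_Icc.2 zero_le_one)).le i
  have hfactor : 0 ≤ 1 + (1 - stepLevel f E i) / f (stepLevel f E i) :=
    add_nonneg zero_le_one (div_nonneg (sub_nonneg.2 hw.2) hfw.le)
  calc ∑ j, pdEdge f β E j i
      = stepCost f E i / β * (1 + (1 - stepLevel f E i) / f (stepLevel f E i)) :=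
        sum_pdEdge_left E β i
    _ ≤ f (stepLevel f E i) / β * (1 + (1 - stepLevel f E i) / f (stepLevel f E i)) := by
        gcongr
    _ = (f (stepLevel f E i) + 1 - stepLevel f E i) / β := by field_simp; ring
    _ ≤ 1 := (div_le_one hβ₀).2 (hβ _ hw)

end Accounting

section LinearAllocation

variable {f : ℝ → ℝ} {α : ℝ} {n : ℕ} (E : Fin n → Fin n → Bool)

lemma pdEdge_of_linear (hα : 0 < α) (hf : ∀ t, f t = t + α) {j i : Fin n}
    (h : j < i ∧ E j i = true) :
    pdEdge f (1 + α) E j i =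
      max (stepLevel f E i - greedyPotential f E i j) 0 / (stepLevel f E i + α) := by
  have hw := stepLevel_mem_Icc (f := f) E i
  have hwα : stepLevel f E i + α ≠ 0 := by linarith [hw.1]
  have h1α : 1 + α ≠ 0 := by linarith
  rw [pdEdge, if_pos h, hf]
  field_simp
  ring

lemma pdEdge_le_log_sub (hα : 0 < α) (hf : ∀ t, f t = t + α) (j i : Fin n) :
    pdEdge f (1 + α) E j i ≤
      log (greedyPotential f E (i + 1) j + α) - log (greedyPotential f E i j + α) := by
  have ha := greedyPotential_mem_Icc (f := f) E i j
  by_cases h : j < i ∧ E j i = true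
  · have hw := stepLevel_mem_Icc (f := f) E i
    rw [pdEdge_of_linear E hα hf h, greedyPotential_succ, if_neg h.1.ne,
      if_pos ((mem_neighborsBefore E).2 h)]
    rcases le_total (stepLevel f E i) (greedyPotential f E i j) with hwa | haw
    · rw [max_eq_left hwa, max_eq_right (sub_nonpos.2 hwa)]
      simp
    · rw [max_eq_right haw, max_eq_left (sub_nonneg.2 haw)]
      have hlog := sub_div_le_log_sub (p := greedyPotential f E i j + α)
        (q := stepLevel f E i + α) (by linarith [ha.1]) (by linarith [hw.1])
      rwa [add_sub_add_right_eq_sub] at hlog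
  · rw [pdEdge, if_neg h, sub_nonneg]
    exact log_le_log (by linarith [ha.1])
      (add_le_add_left (greedyPotential_monotone E j (Nat.le_succ _)) α)

lemma sum_pdEdge_right_le (hα : 0 < α) (hf : ∀ t, f t = t + α) (j : Fin n) :
    ∑ i, pdEdge f (1 + α) E j i ≤ log (1 + α) - log α := by
  set φ : ℕ → ℝ := fun k => log (greedyPotential f E k j + α)
  have hyn := greedyPotential_mem_Icc (f := f) E n j
  calc ∑ i, pdEdge f (1 + α) E j i ≤ ∑ i : Fin n, (φ (i + 1) - φ i) :=
        sum_le_sum fun i _ => pdEdge_le_log_sub E hα hf j i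
    _ = φ n - φ 0 := by
        rw [Fin.sum_univ_eq_sum_range (fun k => φ (k + 1) - φ k), sum_range_sub]
    _ ≤ log (1 + α) - log α := by
        have hφ₀ : φ 0 = log α := by simp [φ, greedyPotential]
        rw [hφ₀, sub_le_sub_iff_right]
        exact log_le_log (by linarith [hyn.1]) (by linarith [hyn.2])

end LinearAllocation

lemma load_le_one_of_left_first {l r : ℕ} (E : Fin (l + r) → Fin (l + r) → Bool)
    (hbip : ∀ i j, E i j = true →
      ((i : ℕ) < l ∧ l ≤ (j : ℕ)) ∨ ((j : ℕ) < l ∧ l ≤ (i : ℕ)))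
    (x : Fin (l + r) → Fin (l + r) → ℝ) (hsupp : ∀ j i, x j i ≠ 0 → j < i ∧ E j i = true)
    (hrow : ∀ j, ∑ i, x j i ≤ 1) (hcol : ∀ i, ∑ j, x j i ≤ 1) (v : Fin (l + r)) :
    ∑ w, x v w + ∑ u, x u v ≤ 1 := by
  have hvanish : ∀ j i : Fin (l + r), (i : ℕ) < l ∨ l ≤ (j : ℕ) → x j i = 0 := by
    intro j i hside
    by_contra hx
    obtain ⟨hji, hE⟩ := hsupp j i hx
    have : (j : ℕ) < i := hji
    rcases hbip j i hE with h | h <;> omega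
  rcases lt_or_ge (v : ℕ) l with hv | hv
  · rw [sum_eq_zero fun u _ => hvanish u v (Or.inl hv), add_zero]
    exact hrow v
  · rw [sum_eq_zero fun w _ => hvanish v w (Or.inr hv), zero_add]
    exact hcol v

/-- Optimal online bipartite vertex cover: on a bipartite graph whose `l` left
vertices all arrive before the `r` right vertices, `GreedyAllocation` with
allocation function `f t = t + α`, `α = 1/(e-1)`, produces a fractional vertex
cover of size at most `(1+α)·|C*| = |C*|/(1-1/e)` for every (integral) vertex
cover `C*`. -/
theorem greedyAllocation_bipartite_optimal (l r : ℕ)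
    (E : Fin (l + r) → Fin (l + r) → Bool)
    (hsymm : ∀ i j, E i j = E j i)
    (hbip : ∀ i j, E i j = true →
      ((i : ℕ) < l ∧ l ≤ (j : ℕ)) ∨ ((j : ℕ) < l ∧ l ≤ (i : ℕ)))
    (α : ℝ) (hα : α = (Real.exp 1 - 1)⁻¹)
    (f : ℝ → ℝ) (hf : ∀ t, f t = t + α)
    (y : Fin (l + r) → ℝ) (hy : y = greedyPotential f E (l + r)) :
    (∀ v, y v ∈ Set.Icc (0:ℝ) 1) ∧
    (∀ i j, E i j = true → 1 ≤ y i + y j) ∧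
    (∀ Cstar : Finset (Fin (l + r)),
      (∀ i j, E i j = true → i ∈ Cstar ∨ j ∈ Cstar) →
      ∑ v, y v ≤ (1 + α) * (Cstar.card : ℝ) ∧
        (1 + α) * (Cstar.card : ℝ) = (Cstar.card : ℝ) / (1 - (Real.exp 1)⁻¹)) := by
  subst hy hα
  have hα₀ : 0 < (exp 1 - 1)⁻¹ := inv_pos.2 exp_one_sub_one_pos
  have hcont : Continuous f := by
    rw [show f = fun t => t + (exp 1 - 1)⁻¹ from funext hf]
    fun_prop
  have hfpos : ∀ t ∈ Set.Icc (0 : ℝ) 1, 0 < f t := fun t ht => by rw [hf]; linarith [ht.1]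
  refine ⟨greedyPotential_mem_Icc E _, fun i j hE => ?_, fun C hC => ⟨?_, ?_⟩⟩
  · rcases lt_trichotomy i j with hij | rfl | hji
    · exact one_le_greedyPotential_add E hij hE
    · rcases hbip i i hE with h | h <;> omega
    · linarith [one_le_greedyPotential_add (f := f) E hji (hsymm i j ▸ hE)]
  · rw [sum_greedyPotential_eq (β := 1 + (exp 1 - 1)⁻¹) E hcont hfpos (by positivity)]
    gcongr
    rw [sum_comm]
    refine sum_le_card_of_load_le_one _ (pdEdge_nonneg E hfpos (by positivity))
      (load_le_one_of_left_first E hbip _ (fun _ _ => lt_and_adj_of_pdEdge_ne_zero E)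
        (fun j => ?_) (fun i => ?_)) C
      fun j i hx => hC j i (lt_and_adj_of_pdEdge_ne_zero E hx).2
    · exact (sum_pdEdge_right_le E hα₀ hf j).trans log_one_add_sub_log_exp_one_sub_one_inv.le
    · exact sum_pdEdge_left_le_one E hcont hfpos (fun t _ => by rw [hf]; linarith) i
  · rw [one_add_exp_one_sub_one_inv, div_eq_mul_inv, mul_comm]
end

section
/- Let n ≥ 1 be an integer and let x_1, …, x_n ∈ [0,1] satisfy Σ_{i=1}^n x_i/(n+1−i) ≤ 1. Then Σ_{i=1}^n x_i ≤ (n+1)(1 − 1/e) + 1. -/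
/-!
Weak LP duality with multiplier `t = n - k` bounds `Σ xᵢ` by `k + (n - k)(1 - Hₖ)`, where
`Hₖ = 1/n + 1/(n-1) + ⋯ + 1/(n-k+1)`; this is the value of the greedy solution that puts
`xᵢ = 1` on the `k` smallest coefficients. Taking `k` maximal with `Hₖ ≤ 1` makes the second
term at most `1`, and `Hₖ ≥ log ((n+1)/(n+1-k))` forces `k ≤ (n+1)(1 - 1/e)`.
-/

open Finset Real

lemma le_max_one_sub_div_add_mul_div {x : ℝ} (hx : x ∈ Set.Icc (0 : ℝ) 1) (t w : ℝ) :
    x ≤ max (1 - t / w) 0 + t * (x / w) := by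
  obtain ⟨hx0, hx1⟩ := hx
  have hmul : t * (x / w) = t / w * x := by ring
  rw [hmul]
  rcases le_total (t / w) 1 with ha | ha
  · nlinarith [le_max_left (1 - t / w) 0]
  · nlinarith [le_max_right (1 - t / w) 0]

/-- Weak duality for `max Σ xᵢ` subject to `Σ xᵢ / wᵢ ≤ 1`, `0 ≤ xᵢ ≤ 1`. -/
theorem sum_le_add_sum_max_of_sum_div_le_one {ι : Type*} {s : Finset ι} {x w : ι → ℝ}
    (hx : ∀ i ∈ s, x i ∈ Set.Icc (0 : ℝ) 1) (hxw : ∑ i ∈ s, x i / w i ≤ 1)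
    {t : ℝ} (ht : 0 ≤ t) :
    ∑ i ∈ s, x i ≤ t + ∑ i ∈ s, max (1 - t / w i) 0 :=
  calc ∑ i ∈ s, x i ≤ ∑ i ∈ s, (max (1 - t / w i) 0 + t * (x i / w i)) :=
        sum_le_sum fun i hi => le_max_one_sub_div_add_mul_div (hx i hi) t (w i)
    _ = t * ∑ i ∈ s, x i / w i + ∑ i ∈ s, max (1 - t / w i) 0 := by
        rw [sum_add_distrib, mul_sum, add_comm]
    _ ≤ t + ∑ i ∈ s, max (1 - t / w i) 0 := by
        gcongr
        exact mul_le_of_le_one_right ht hxw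

noncomputable def harmonicTail (n k : ℕ) : ℝ := ∑ i ∈ range k, ((n : ℝ) - i)⁻¹

lemma harmonicTail_zero (n : ℕ) : harmonicTail n 0 = 0 := sum_range_zero _

lemma harmonicTail_succ (n k : ℕ) :
    harmonicTail n (k + 1) = harmonicTail n k + ((n : ℝ) - k)⁻¹ :=
  sum_range_succ _ _

lemma sum_max_one_sub_div_eq {n k : ℕ} (hk : k ≤ n) :
    ∑ i ∈ range n, max (1 - ((n : ℝ) - k) / ((n : ℝ) - i)) 0
      = k - ((n : ℝ) - k) * harmonicTail n k := by
  have hkn : (k : ℝ) ≤ n := by exact_mod_cast hk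
  rw [← sum_range_add_sum_Ico _ hk]
  have hhead : ∀ i ∈ range k, max (1 - ((n : ℝ) - k) / ((n : ℝ) - i)) 0
      = 1 - ((n : ℝ) - k) * ((n : ℝ) - i)⁻¹ := by
    intro i hi
    have hik : (i : ℝ) < k := by exact_mod_cast mem_range.mp hi
    rw [← div_eq_mul_inv]
    refine max_eq_left ?_
    rw [sub_nonneg, div_le_one (by linarith)]
    linarith
  have htail : ∀ i ∈ Ico k n, max (1 - ((n : ℝ) - k) / ((n : ℝ) - i)) 0 = 0 := by
    intro i hi
    obtain ⟨hki, hin⟩ := mem_Ico.mp hi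
    have hki : (k : ℝ) ≤ i := by exact_mod_cast hki
    have hin : (i : ℝ) < n := by exact_mod_cast hin
    refine max_eq_right ?_
    rw [sub_nonpos, one_le_div (by linarith)]
    linarith
  rw [sum_congr rfl hhead, sum_congr rfl htail, sum_const_zero, add_zero, sum_sub_distrib,
    ← mul_sum, sum_const, card_range, nsmul_one, harmonicTail]

theorem sum_le_of_sum_div_sub_le_one {n : ℕ} {x : ℕ → ℝ}
    (hx : ∀ i ∈ range n, x i ∈ Set.Icc (0 : ℝ) 1)
    (hsum : ∑ i ∈ range n, x i / ((n : ℝ) - i) ≤ 1) {k : ℕ} (hk : k ≤ n) :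
    ∑ i ∈ range n, x i ≤ k + ((n : ℝ) - k) * (1 - harmonicTail n k) := by
  have hkn : (k : ℝ) ≤ n := by exact_mod_cast hk
  have hdual := sum_le_add_sum_max_of_sum_div_le_one hx hsum (sub_nonneg.mpr hkn)
  rw [sum_max_one_sub_div_eq hk] at hdual
  linarith

lemma log_add_one_sub_log_le_inv {a : ℝ} (ha : 0 < a) : log (a + 1) - log a ≤ a⁻¹ := by
  have h := log_le_sub_one_of_pos (x := (a + 1) / a) (by positivity)
  rw [log_div (by positivity) ha.ne'] at h
  calc log (a + 1) - log a ≤ (a + 1) / a - 1 := h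
    _ = a⁻¹ := by field_simp; ring

lemma log_sub_log_le_harmonicTail {n k : ℕ} (hk : k ≤ n) :
    log ((n : ℝ) + 1) - log ((n : ℝ) + 1 - k) ≤ harmonicTail n k := by
  induction k with
  | zero => simp [harmonicTail_zero]
  | succ m ih =>
    have hm : (m : ℝ) < n := by exact_mod_cast hk
    have hstep := log_add_one_sub_log_le_inv (a := (n : ℝ) - m) (by linarith)
    rw [harmonicTail_succ, Nat.cast_succ]
    have hprev := ih (Nat.le_of_succ_le hk)
    rw [show (n : ℝ) - m + 1 = n + 1 - m by ring] at hstep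
    rw [show (n : ℝ) + 1 - (m + 1) = n - m by ring]
    linarith

lemma le_mul_one_sub_inv_exp_of_log_sub_log_le_one {a y : ℝ} (hy0 : 0 ≤ y) (hy : y < a)
    (hlog : log a - log (a - y) ≤ 1) : y ≤ a * (1 - 1 / exp 1) := by
  have ha : 0 < a := by linarith
  have hay : 0 < a - y := by linarith
  rw [← log_div ha.ne' hay.ne', log_le_iff_le_exp (div_pos ha hay),
    div_le_iff₀ hay] at hlog
  have hdiv : a / exp 1 ≤ a - y := by
    rw [div_le_iff₀ (exp_pos 1)]
    linarith
  rw [mul_sub, mul_one, mul_one_div]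
  linarith

noncomputable def greedyCut (n : ℕ) : ℕ := Nat.findGreatest (fun k => harmonicTail n k ≤ 1) n

lemma greedyCut_le (n : ℕ) : greedyCut n ≤ n := Nat.findGreatest_le n

lemma harmonicTail_greedyCut_le_one (n : ℕ) : harmonicTail n (greedyCut n) ≤ 1 :=
  Nat.findGreatest_spec (P := fun k => harmonicTail n k ≤ 1) (Nat.zero_le n)
    (by simp [harmonicTail_zero])

lemma sub_greedyCut_mul_one_sub_harmonicTail_le_one (n : ℕ) :
    ((n : ℝ) - greedyCut n) * (1 - harmonicTail n (greedyCut n)) ≤ 1 := by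
  set k := greedyCut n
  rcases (greedyCut_le n).eq_or_lt with hkn | hkn
  · rw [show k = n from hkn, sub_self, zero_mul]
    exact zero_le_one
  · have hnext : 1 < harmonicTail n (k + 1) :=
      not_le.mp (Nat.findGreatest_is_greatest (Nat.lt_succ_self k) hkn)
    rw [harmonicTail_succ] at hnext
    have hpos : (0 : ℝ) < n - k := sub_pos.mpr (by exact_mod_cast hkn)
    calc ((n : ℝ) - k) * (1 - harmonicTail n k) ≤ ((n : ℝ) - k) * ((n : ℝ) - k)⁻¹ := by
          gcongr
          linarith
      _ = 1 := mul_inv_cancel₀ hpos.ne'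

lemma greedyCut_le_mul_one_sub_inv_exp (n : ℕ) :
    (greedyCut n : ℝ) ≤ ((n : ℝ) + 1) * (1 - 1 / exp 1) := by
  have hk : (greedyCut n : ℝ) ≤ n := by exact_mod_cast greedyCut_le n
  refine le_mul_one_sub_inv_exp_of_log_sub_log_le_one (Nat.cast_nonneg _) (by linarith) ?_
  exact (log_sub_log_le_harmonicTail (greedyCut_le n)).trans (harmonicTail_greedyCut_le_one n)

theorem matching_lp_bound_general (n : ℕ) (x : ℕ → ℝ)
    (hx : ∀ i ∈ Finset.range n, x i ∈ Set.Icc (0:ℝ) 1)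
    (hsum : ∑ i ∈ Finset.range n, x i / ((n : ℝ) - (i : ℝ)) ≤ 1) :
    ∑ i ∈ Finset.range n, x i ≤ ((n : ℝ) + 1) * (1 - 1 / Real.exp 1) + 1 :=
  (sum_le_of_sum_div_sub_le_one hx hsum (greedyCut_le n)).trans
    (add_le_add (greedyCut_le_mul_one_sub_inv_exp n)
      (sub_greedyCut_mul_one_sub_harmonicTail_le_one n))

/-- LP bound behind the `1 - 1/e` hardness for online bipartite matching:
if `x_1, …, x_n ∈ [0,1]` (indexed here by `i = 0, …, n-1`, so that the
coefficient `n + 1 - i` of the 1-based statement becomes `n - i`) satisfy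
`Σ_i x_i/(n - i) ≤ 1`, then `Σ_i x_i ≤ (n+1)(1 - 1/e) + 1`. -/
theorem matching_lp_bound (n : ℕ) (hn : 1 ≤ n) (x : ℕ → ℝ)
    (hx : ∀ i ∈ Finset.range n, x i ∈ Set.Icc (0:ℝ) 1)
    (hsum : ∑ i ∈ Finset.range n, x i / ((n : ℝ) - (i : ℝ)) ≤ 1) :
    ∑ i ∈ Finset.range n, x i ≤ ((n : ℝ) + 1) * (1 - 1 / Real.exp 1) + 1 :=
  matching_lp_bound_general n x hx hsum
end
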